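/- Let n be a nonempty finite index type, η > 0, d : n → ℝ, g^0, …, g^e : Matrix n n ℝ, and μ^x i j ∈ {0,1} mask indicators for i ≠ j. For α ≥ 0 define the trajectory N^0(α) = diag(d) and N^{x+1}(α) = N^x(α) + η · (GM^x(α) ∘ g^x), where GM^x(α) i i = 1 and GM^x(α) i j = α · μ^x i j for i ≠ j and ∘ is the entrywise (Hadamard) product. Assume that for every i and every k with 0 ≤ k ≤ e+1, d i + η · Σ_{x=0}^{k-1} g^x i i ≠ 0. Then there exists α₀ > 0 such that for every α with 0 ≤ α < α₀, every iterate N^k(α) for k = 0, 1, …, e+1 is strictly diagonally dominant, and hence invertible. -/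
import Mathlib


open Finset Matrix
open scoped Matrix

/-- Trajectory-wise strengthening of AffineQuant's Theorem 1: for a
sufficiently small stability factor `α`, every iterate of the Gradual-Mask
update `N^{x+1} = N^x + η • (GM^x(α) ⊙ g^x)` starting from `diag d` is
strictly diagonally dominant, and hence invertible. -/
theorem gradual_mask_trajectory_sdd_invertible
    {n : Type*} [Fintype n] [Nonempty n] [DecidableEq n]
    (η : ℝ) (hη : 0 < η) (d : n → ℝ) (e : ℕ)
    (g : ℕ → Matrix n n ℝ) (μ : ℕ → n → n → ℝ)
    (hμ : ∀ x, x ≤ e → ∀ i j : n, i ≠ j → μ x i j = 0 ∨ μ x i j = 1)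
    (GM : ℝ → ℕ → Matrix n n ℝ)
    (hGMdiag : ∀ α : ℝ, 0 ≤ α → ∀ x, x ≤ e → ∀ i : n, GM α x i i = 1)
    (hGMoff : ∀ α : ℝ, 0 ≤ α → ∀ x, x ≤ e → ∀ i j : n, i ≠ j →
      GM α x i j = α * μ x i j)
    (N : ℝ → ℕ → Matrix n n ℝ)
    (hN0 : ∀ α : ℝ, 0 ≤ α → N α 0 = Matrix.diagonal d)
    (hNs : ∀ α : ℝ, 0 ≤ α → ∀ x, x ≤ e →
      N α (x + 1) = N α x + η • (GM α x ⊙ g x))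
    (hd : ∀ i : n, ∀ k, k ≤ e + 1 →
      d i + η * ∑ x ∈ Finset.range k, g x i i ≠ 0) :
    ∃ α₀ : ℝ, 0 < α₀ ∧ ∀ α : ℝ, 0 ≤ α → α < α₀ → ∀ k, k ≤ e + 1 →
      (∀ i : n, ∑ j ∈ Finset.univ.erase i, |N α k i j| < |N α k i i|) ∧
      (N α k).det ≠ 0 := by
  classical
  -- D : positive lower bound on the diagonal entries along the trajectory
  set D : ℝ := (Finset.univ : Finset (n × Fin (e + 2))).inf'
      (by simp [Finset.univ_nonempty])
      (fun p => |d p.1 + η * ∑ x ∈ Finset.range p.2, g x p.1 p.1|) with hD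
  have hDpos : 0 < D := by
    rw [hD, Finset.lt_inf'_iff]
    rintro ⟨i, k⟩ _
    exact abs_pos.mpr (hd i k (Nat.lt_succ_iff.mp k.2))
  have hDle : ∀ (i : n) (k : ℕ), k ≤ e + 1 →
      D ≤ |d i + η * ∑ x ∈ Finset.range k, g x i i| := by
    intro i k hk
    exact Finset.inf'_le _ (Finset.mem_univ (⟨i, ⟨k, Nat.lt_succ_of_le hk⟩⟩ : n × Fin (e + 2)))
  -- M : upper bound on accumulated off-diagonal mass
  set M : ℝ := 1 + η * ∑ x ∈ Finset.range (e + 1), ∑ i : n, ∑ j : n, |g x i j| with hM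
  have hMpos : 0 < M := by
    have : 0 ≤ ∑ x ∈ Finset.range (e + 1), ∑ i : n, ∑ j : n, |g x i j| := by
      positivity
    nlinarith
  refine ⟨D / M, div_pos hDpos hMpos, ?_⟩
  intro α hα hαlt k hk
  -- key structural facts about the trajectory, by induction on k
  have key : ∀ k, k ≤ e + 1 →
      (∀ i : n, N α k i i = d i + η * ∑ x ∈ Finset.range k, g x i i) ∧
      (∀ i j : n, i ≠ j →
        |N α k i j| ≤ α * (η * ∑ x ∈ Finset.range k, |g x i j|)) := by
    intro k
    induction k with
    | zero =>
      intro _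
      constructor
      · intro i; simp [hN0 α hα, Matrix.diagonal_apply_eq]
      · intro i j hij; simp [hN0 α hα, Matrix.diagonal_apply_ne _ hij]
    | succ m ih =>
      intro hm
      have hme : m ≤ e := Nat.lt_succ_iff.mp hm
      obtain ⟨ihd, iho⟩ := ih (Nat.le_of_succ_le hm)
      have hstep := hNs α hα m hme
      constructor
      · intro i
        have : N α (m + 1) i i = N α m i i + η * (GM α m i i * g m i i) := by
          rw [hstep]; simp [Matrix.hadamard]
        rw [this, ihd i, hGMdiag α hα m hme i, Finset.sum_range_succ]
        ring
      · intro i j hij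
        have hentry : N α (m + 1) i j = N α m i j + η * (α * μ m i j * g m i j) := by
          rw [hstep]; simp [Matrix.hadamard, hGMoff α hα m hme i j hij]
        have hμb : |μ m i j| ≤ 1 := by
          rcases hμ m hme i j hij with h | h <;> simp [h]
        calc |N α (m + 1) i j|
            ≤ |N α m i j| + |η * (α * μ m i j * g m i j)| := by
              rw [hentry]; exact abs_add_le _ _
          _ ≤ α * (η * ∑ x ∈ Finset.range m, |g x i j|)
              + η * (α * |g m i j|) := by
              refine add_le_add (iho i j hij) ?_
              rw [abs_mul, abs_of_pos hη, abs_mul, abs_mul, abs_of_nonneg hα]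
              have : α * |μ m i j| * |g m i j| ≤ α * 1 * |g m i j| := by
                apply mul_le_mul_of_nonneg_right _ (abs_nonneg _)
                exact mul_le_mul_of_nonneg_left hμb hα
              nlinarith
          _ = α * (η * ∑ x ∈ Finset.range (m + 1), |g x i j|) := by
              rw [Finset.sum_range_succ]; ring
  obtain ⟨kd, ko⟩ := key k hk
  have sdd : ∀ i : n, ∑ j ∈ Finset.univ.erase i, |N α k i j| < |N α k i i| := by
    intro i
    have h1 : ∑ j ∈ Finset.univ.erase i, |N α k i j|
        ≤ α * (η * ∑ j ∈ Finset.univ.erase i, ∑ x ∈ Finset.range k, |g x i j|) := by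
      rw [Finset.mul_sum, Finset.mul_sum]
      refine Finset.sum_le_sum fun j hj => ?_
      have hij : i ≠ j := (Finset.ne_of_mem_erase hj).symm
      exact ko i j hij
    have h2 : η * ∑ j ∈ Finset.univ.erase i, ∑ x ∈ Finset.range k, |g x i j| ≤ M := by
      rw [hM]
      have hle : ∑ j ∈ Finset.univ.erase i, ∑ x ∈ Finset.range k, |g x i j|
          ≤ ∑ x ∈ Finset.range (e + 1), ∑ i' : n, ∑ j : n, |g x i' j| := by
        rw [Finset.sum_comm]
        refine le_trans (Finset.sum_le_sum_of_subset_of_nonneg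
          (Finset.range_subset_range.mpr hk) (fun _ _ _ => by positivity)) ?_
        refine Finset.sum_le_sum fun x _ => ?_
        calc ∑ j ∈ Finset.univ.erase i, |g x i j| ≤ ∑ j : n, |g x i j| :=
              Finset.sum_le_sum_of_subset_of_nonneg (Finset.erase_subset _ _)
                (fun _ _ _ => abs_nonneg _)
          _ ≤ ∑ i' : n, ∑ j : n, |g x i' j| :=
              Finset.single_le_sum (f := fun i' => ∑ j : n, |g x i' j|)
                (fun _ _ => by positivity) (Finset.mem_univ i)
      nlinarith
    have h3 : α * M < D := by
      calc α * M < (D / M) * M := by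
            exact mul_lt_mul_of_pos_right hαlt hMpos
        _ = D := by field_simp
    calc ∑ j ∈ Finset.univ.erase i, |N α k i j|
        ≤ α * (η * ∑ j ∈ Finset.univ.erase i, ∑ x ∈ Finset.range k, |g x i j|) := h1
      _ ≤ α * M := mul_le_mul_of_nonneg_left h2 hα
      _ < D := h3
      _ ≤ |N α k i i| := by rw [kd i]; exact hDle i k hk
  refine ⟨sdd, ?_⟩
  apply det_ne_zero_of_sum_row_lt_diag
  simpa [Real.norm_eq_abs] using sdd
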